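/- arXiv:2407.08253 — 4 statements merged into one kernel-verified Lean document; each statement's English description precedes it below -/
import Mathlib

section
/- Let ū > 0 and define sat(y) = sign(y)·min{|y|, ū} and the deadzone φ(y) = sat(y) − y for y ∈ ℝ. Then for every y ∈ ℝ and every g ∈ ℝ with |g| ≤ ū, the inequality φ(y)·(φ(y) + y + g) ≤ 0 holds. -/
/-- Scalar saturation with bound `u`. -/
noncomputable def sat1 (u y : ℝ) : ℝ := Real.sign y * min |y| u

/-- Scalar deadzone. -/
noncomputable def dz1 (u y : ℝ) : ℝ := sat1 u y - y

/-- scalar sector condition for the deadzone. -/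
theorem stmt0 (u : ℝ) (hu : 0 < u) (y g : ℝ) (hg : |g| ≤ u) :
    dz1 u y * (dz1 u y + y + g) ≤ 0 := by
  obtain ⟨hg1, hg2⟩ := abs_le.mp hg
  rcases lt_trichotomy y 0 with hy | hy | hy
  · rw [dz1, sat1, Real.sign_of_neg hy, abs_of_neg hy]
    rcases le_or_gt (-y) u with h | h
    · rw [min_eq_left h]; ring_nf; nlinarith
    · rw [min_eq_right h.le]; nlinarith
  · simp [dz1, sat1, hy]
  · rw [dz1, sat1, Real.sign_of_pos hy, abs_of_pos hy]
    rcases le_or_gt y u with h | h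
    · rw [min_eq_left h]; ring_nf; nlinarith
    · rw [min_eq_right h.le]; nlinarith
end

section
/- Generalized sector condition (Lemma 1): Let C, G ∈ ℝ^{m_a×n}, ū ∈ ℝ^{m_a} with ū_(i) > 0 for all i, and let x ∈ ℝ^n satisfy |G_(i) x| ≤ ū_(i) for every i = 1,…,m_a (i.e., x ∈ 𝓛(ū)). Then for every diagonal positive definite matrix S ∈ ℝ^{m_a×m_a}, the deadzone nonlinearity satisfies φ(Cx)ᵀ S⁻¹ (φ(Cx) + Cx + Gx) ≤ 0. -/
/-!
Since `φ(v) + v = sat(v)`, the quadratic form is a sum of terms `φ(v)ᵢ (sat(v)ᵢ + wᵢ)` weighted by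
the positive diagonal entries of `S⁻¹`. Each term is nonpositive when `|wᵢ| ≤ ūᵢ`: `φ(v)ᵢ = 0`
unless `vᵢ` saturates, and then `φ(v)ᵢ` and `sat(v)ᵢ + wᵢ = ±ūᵢ + wᵢ` have opposite signs.
-/

open Matrix

/-- Decentralized (componentwise) saturation with bounds `ub`. -/
noncomputable def satv {m : Type*} (ub v : m → ℝ) : m → ℝ :=
  fun i => Real.sign (v i) * min |v i| (ub i)

/-- Decentralized deadzone nonlinearity. -/
noncomputable def dzv {m : Type*} (ub v : m → ℝ) : m → ℝ :=
  satv ub v - v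

lemma Real.sign_mul_abs (r : ℝ) : Real.sign r * |r| = r := by
  rcases lt_trichotomy r 0 with hr | rfl | hr
  · rw [Real.sign_of_neg hr, abs_of_neg hr, neg_one_mul, neg_neg]
  · rw [abs_zero, mul_zero]
  · rw [Real.sign_of_pos hr, abs_of_pos hr, one_mul]

lemma dzv_add_self {m : Type*} (ub v : m → ℝ) : dzv ub v + v = satv ub v :=
  sub_add_cancel _ _

lemma dzv_apply_mul_satv_apply_add_nonpos {m : Type*} (ub v w : m → ℝ) (i : m)
    (hw : |w i| ≤ ub i) : dzv ub v i * (satv ub v i + w i) ≤ 0 := by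
  simp only [dzv, satv, Pi.sub_apply]
  rcases le_or_gt |v i| (ub i) with hsat | hsat
  · rw [min_eq_left hsat, Real.sign_mul_abs, sub_self, zero_mul]
  · rw [min_eq_right hsat.le]
    obtain ⟨hw_lower, hw_upper⟩ := abs_le.mp hw
    rcases lt_abs.mp hsat with hv | hv
    · rw [Real.sign_of_pos (by linarith)]
      exact mul_nonpos_of_nonpos_of_nonneg (by linarith) (by linarith)
    · rw [Real.sign_of_neg (by linarith)]
      exact mul_nonpos_of_nonneg_of_nonpos (by linarith) (by linarith)

lemma dotProduct_diagonal_mulVec_nonpos {m R : Type*} [Fintype m] [DecidableEq m] [CommRing R]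
    [PartialOrder R] [IsOrderedRing R] {d a b : m → R} (hd : ∀ i, 0 ≤ d i)
    (hab : ∀ i, a i * b i ≤ 0) : a ⬝ᵥ (diagonal d *ᵥ b) ≤ 0 :=
  Finset.sum_nonpos fun i _ => by
    rw [mulVec_diagonal, mul_left_comm]
    exact mul_nonpos_of_nonneg_of_nonpos (hd i) (hab i)

theorem stmt1_general {ma n : ℕ} (C G : Matrix (Fin ma) (Fin n) ℝ)
    (ub : Fin ma → ℝ)
    (x : Fin n → ℝ) (hx : ∀ i, |(G *ᵥ x) i| ≤ ub i)
    (S : Matrix (Fin ma) (Fin ma) ℝ)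
    (hSdiag : ∃ d : Fin ma → ℝ, S = Matrix.diagonal d) (hS : S.PosDef) :
    dzv ub (C *ᵥ x) ⬝ᵥ (S⁻¹ *ᵥ (dzv ub (C *ᵥ x) + C *ᵥ x + G *ᵥ x)) ≤ 0 := by
  obtain ⟨d, rfl⟩ := hSdiag
  have hinv_pos : ∀ i, 0 < Ring.inverse d i := posDef_diagonal_iff.mp (inv_diagonal d ▸ hS.inv)
  rw [inv_diagonal, dzv_add_self]
  exact dotProduct_diagonal_mulVec_nonpos (fun i => (hinv_pos i).le)
    fun i => dzv_apply_mul_satv_apply_add_nonpos ub _ _ i (hx i)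

/-- generalized sector condition, Lemma 1: if `x ∈ 𝓛(ū)`,
then for every diagonal positive definite `S`,
`φ(Cx)ᵀ S⁻¹ (φ(Cx) + Cx + Gx) ≤ 0`. -/
theorem stmt1 {ma n : ℕ} (C G : Matrix (Fin ma) (Fin n) ℝ)
    (ub : Fin ma → ℝ) (hub : ∀ i, 0 < ub i)
    (x : Fin n → ℝ) (hx : ∀ i, |(G *ᵥ x) i| ≤ ub i)
    (S : Matrix (Fin ma) (Fin ma) ℝ)
    (hSdiag : ∃ d : Fin ma → ℝ, S = Matrix.diagonal d) (hS : S.PosDef) :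
    dzv ub (C *ᵥ x) ⬝ᵥ (S⁻¹ *ᵥ (dzv ub (C *ᵥ x) + C *ᵥ x + G *ᵥ x)) ≤ 0 :=
  stmt1_general C G ub x hx S hSdiag hS
end

section
/- Finsler's lemma, second implication: Let Υ ∈ ℝ^{n×n} be symmetric and Γ ∈ ℝ^{m×n}. If ζᵀΥζ < 0 for every nonzero ζ ∈ ℝ^n with Γζ = 0, then there exists a matrix X ∈ ℝ^{n×m} such that Υ + XΓ + ΓᵀXᵀ is negative definite. -/
/-!
On the kernel of `Γ` the form `ζᵀΥζ` is negative, so on the unit sphere `ζᵀΥζ < μ‖Γζ‖²`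
holds for every large enough `μ` at each point, and by compactness for a single `μ`.
By homogeneity `μΓᵀΓ - Υ` is then positive definite, and `X = -(μ/2)Γᵀ` is a witness.
-/

open Matrix

/-- The sets `{f < k g}` increase with `k` because `g ≥ 0`, and cover `K`; compactness picks one. -/
theorem IsCompact.exists_lt_mul_of_lt_zero_of_eq_zero {X : Type*} [TopologicalSpace X]
    {K : Set X} (hK : IsCompact K) {f g : X → ℝ} (hf : Continuous f) (hg : Continuous g)
    (hg_nonneg : ∀ x, 0 ≤ g x) (hfg : ∀ x ∈ K, g x = 0 → f x < 0) :
    ∃ μ : ℝ, ∀ x ∈ K, f x < μ * g x := by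
  let U : ℕ → Set X := fun k => {x | f x < k * g x}
  have hU_open : ∀ k, IsOpen (U k) := fun k =>
    isOpen_lt hf (continuous_const.mul hg)
  have hU_mono : Monotone U := fun k l hkl x (hx : f x < k * g x) =>
    hx.trans_le (mul_le_mul_of_nonneg_right (by exact_mod_cast hkl) (hg_nonneg x))
  have hU_cover : K ⊆ ⋃ k, U k := by
    intro x hx
    rcases (hg_nonneg x).eq_or_lt with hgx | hgx
    · exact Set.mem_iUnion.2 ⟨0, by simpa [U, ← hgx] using hfg x hx hgx.symm⟩
    · obtain ⟨k, hk⟩ := exists_nat_gt (f x / g x)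
      exact Set.mem_iUnion.2 ⟨k, (div_lt_iff₀ hgx).1 hk⟩
  obtain ⟨k, hk⟩ := hK.elim_directed_cover U hU_open hU_cover hU_mono.directed_le
  exact ⟨k, hk⟩

theorem Matrix.dotProduct_smul_mulVec_smul {ι : Type*} [Fintype ι] (A : Matrix ι ι ℝ)
    (c : ℝ) (x : ι → ℝ) : (c • x) ⬝ᵥ (A *ᵥ (c • x)) = c ^ 2 * (x ⬝ᵥ (A *ᵥ x)) := by
  rw [mulVec_smul, smul_dotProduct, dotProduct_smul, smul_eq_mul, smul_eq_mul]
  ring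

theorem Matrix.posDef_of_isSymm_of_pos_on_sphere {ι : Type*} [Fintype ι]
    {A : Matrix ι ι ℝ} (hA : A.IsSymm)
    (hpos : ∀ x ∈ Metric.sphere (0 : ι → ℝ) 1, 0 < x ⬝ᵥ (A *ᵥ x)) : A.PosDef := by
  refine PosDef.of_dotProduct_mulVec_pos (isHermitian_iff_isSymm.2 hA) fun x hx => ?_
  have hx_norm : 0 < ‖x‖ := norm_pos_iff.2 hx
  have hy : (‖x‖⁻¹ • x) ∈ Metric.sphere (0 : ι → ℝ) 1 := by
    simpa using norm_smul_inv_norm (𝕜 := ℝ) hx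
  have hxy : x = ‖x‖ • (‖x‖⁻¹ • x) := by
    rw [smul_smul, mul_inv_cancel₀ hx_norm.ne', one_smul]
  rw [star_trivial, hxy, dotProduct_smul_mulVec_smul]
  exact mul_pos (pow_pos hx_norm 2) (hpos _ hy)

theorem Matrix.dotProduct_smul_transpose_mul_self_sub_mulVec {m n : Type*} [Fintype m]
    [Fintype n] (Υ : Matrix n n ℝ) (Γ : Matrix m n ℝ) (μ : ℝ) (x : n → ℝ) :
    x ⬝ᵥ ((μ • (Γᵀ * Γ) - Υ) *ᵥ x) = μ * ((Γ *ᵥ x) ⬝ᵥ (Γ *ᵥ x)) - x ⬝ᵥ (Υ *ᵥ x) := by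
  rw [sub_mulVec, dotProduct_sub, smul_mulVec, dotProduct_smul, smul_eq_mul,
    ← mulVec_mulVec, dotProduct_mulVec x Γᵀ, vecMul_transpose]

theorem Matrix.neg_add_mul_add_transpose_mul_transpose_smul {m n : Type*} [Fintype m]
    [Fintype n] (Υ : Matrix n n ℝ) (Γ : Matrix m n ℝ) (μ : ℝ) :
    -(Υ + (-(μ / 2)) • Γᵀ * Γ + Γᵀ * ((-(μ / 2)) • Γᵀ)ᵀ) = μ • (Γᵀ * Γ) - Υ := by
  rw [transpose_smul, transpose_transpose, Matrix.smul_mul, Matrix.mul_smul]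
  module

/-- Finsler's lemma, direction (i) ⟹ (ii): if `ζᵀΥζ < 0` for every
nonzero `ζ` in the kernel of `Γ`, then there is `X` with `Υ + XΓ + ΓᵀXᵀ ≺ 0`. -/
theorem stmt3 {n m : ℕ} (Υ : Matrix (Fin n) (Fin n) ℝ) (hΥ : Υ.IsSymm)
    (Γ : Matrix (Fin m) (Fin n) ℝ)
    (h : ∀ ζ : Fin n → ℝ, ζ ≠ 0 → Γ *ᵥ ζ = 0 → ζ ⬝ᵥ (Υ *ᵥ ζ) < 0) :
    ∃ X : Matrix (Fin n) (Fin m) ℝ, (-(Υ + X * Γ + Γᵀ * Xᵀ)).PosDef := by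
  obtain ⟨μ, hμ⟩ := (isCompact_sphere (0 : Fin n → ℝ) 1).exists_lt_mul_of_lt_zero_of_eq_zero
    (f := fun ζ => ζ ⬝ᵥ (Υ *ᵥ ζ)) (g := fun ζ => (Γ *ᵥ ζ) ⬝ᵥ (Γ *ᵥ ζ))
    (by fun_prop) (by fun_prop) (fun ζ => dotProduct_self_star_nonneg (Γ *ᵥ ζ))
    fun ζ hζ hΓζ => h ζ (Metric.ne_of_mem_sphere hζ one_ne_zero) (dotProduct_self_eq_zero.1 hΓζ)
  refine ⟨(-(μ / 2)) • Γᵀ, ?_⟩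
  rw [neg_add_mul_add_transpose_mul_transpose_smul]
  have hsymm : (μ • (Γᵀ * Γ) - Υ).IsSymm :=
    (IsSymm.smul (by simp [IsSymm, transpose_mul]) μ).sub hΥ
  refine posDef_of_isSymm_of_pos_on_sphere hsymm fun ζ hζ => ?_
  rw [dotProduct_smul_transpose_mul_self_sub_mulVec]
  linarith [hμ ζ hζ]
end

section
/- Ellipsoid inclusion from the LMI condition: Let P ∈ ℝ^{n×n} be symmetric positive definite, G ∈ ℝ^{m×n}, ū ∈ ℝ^m with ū_(i) > 0, and μ > 0. If for each i = 1,…,m the (n+1)×(n+1) block matrix [P, G_(i)ᵀ; G_(i), μ ū_(i)²] is positive semidefinite, then the ellipsoid ε(P,μ) = { x ∈ ℝ^n : xᵀPx ≤ μ⁻¹ } is contained in the polyhedral set 𝓛(ū) = { x ∈ ℝ^n : |G_(i) x| ≤ ū_(i), i = 1,…,m }. -/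
/-!
Testing the block matrix `[P, gᵀ; g, c]` (with `g = G_(i)`, `c = μ ū_(i)²`) against the vectors
`(x, t)` shows that `t ↦ c t² + 2 (g ⬝ x) t + xᵀPx` is nonnegative, so its discriminant is
nonpositive: `(g ⬝ x)² ≤ c · xᵀPx`. On the ellipsoid `xᵀPx ≤ μ⁻¹` this gives `(g ⬝ x)² ≤ ū_(i)²`.
-/

open Matrix

theorem dotProduct_fromBlocks_mulVec_sumElim {R : Type*} [CommRing R] {n : Type*} [Fintype n]
    (A : Matrix n n R) (g : n → R) (c : R) (x : n → R) (t : R) :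
    Sum.elim x (fun _ : Fin 1 => t) ⬝ᵥ
        (fromBlocks A (of fun j (_ : Fin 1) => g j) (of fun _ j => g j) (of fun _ _ => c) *ᵥ
          Sum.elim x (fun _ : Fin 1 => t)) =
      c * (t * t) + 2 * (g ⬝ᵥ x) * t + x ⬝ᵥ (A *ᵥ x) := by
  have hcol : x ⬝ᵥ ((of fun j (_ : Fin 1) => g j) *ᵥ fun _ => t) = (g ⬝ᵥ x) * t := by
    simp [dotProduct, mulVec, Finset.mul_sum, mul_comm, mul_left_comm]
  have hrow : (fun _ : Fin 1 => t) ⬝ᵥ ((of fun _ j => g j) *ᵥ x) = (g ⬝ᵥ x) * t := by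
    simp [dotProduct, mulVec, mul_comm]
  have hcorner :
      (fun _ : Fin 1 => t) ⬝ᵥ ((of fun _ _ => c) *ᵥ fun _ : Fin 1 => t) = c * (t * t) := by
    simp [dotProduct, mulVec, mul_left_comm]
  rw [fromBlocks_mulVec]
  simp only [Sum.elim_comp_inl, Sum.elim_comp_inr, sumElim_dotProduct_sumElim, dotProduct_add,
    hcol, hrow, hcorner]
  ring

theorem sq_dotProduct_le_of_fromBlocks_posSemidef {K : Type*} [Field K] [LinearOrder K]
    [IsStrictOrderedRing K] [StarRing K] [TrivialStar K] {n : Type*} [Fintype n]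
    {A : Matrix n n K} {g : n → K} {c : K}
    (h : (fromBlocks A (of fun j (_ : Fin 1) => g j) (of fun _ j => g j)
      (of fun _ _ => c)).PosSemidef)
    (x : n → K) : (g ⬝ᵥ x) ^ 2 ≤ c * (x ⬝ᵥ (A *ᵥ x)) := by
  have hquad (t : K) : 0 ≤ c * (t * t) + 2 * (g ⬝ᵥ x) * t + x ⬝ᵥ (A *ᵥ x) := by
    simpa [dotProduct_fromBlocks_mulVec_sumElim] using
      h.dotProduct_mulVec_nonneg (Sum.elim x fun _ => t)
  have hdisc := discrim_le_zero hquad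
  rw [discrim] at hdisc
  linarith

theorem stmt12_general {n m : ℕ} (P : Matrix (Fin n) (Fin n) ℝ)
    (G : Matrix (Fin m) (Fin n) ℝ) (ub : Fin m → ℝ) (hub : ∀ i, 0 < ub i)
    (μ : ℝ) (hμ : 0 < μ)
    (h : ∀ i : Fin m,
      (Matrix.fromBlocks P (Matrix.of fun j (_ : Fin 1) => G i j)
        (Matrix.of fun (_ : Fin 1) j => G i j)
        (Matrix.of fun _ _ => μ * ub i ^ 2)).PosSemidef) :
    {x : Fin n → ℝ | x ⬝ᵥ (P *ᵥ x) ≤ μ⁻¹} ⊆ {x : Fin n → ℝ | ∀ i, |(G *ᵥ x) i| ≤ ub i} := by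
  intro x hx i
  refine abs_le_of_sq_le_sq ?_ (hub i).le
  calc (G i ⬝ᵥ x) ^ 2 ≤ μ * ub i ^ 2 * (x ⬝ᵥ (P *ᵥ x)) :=
        sq_dotProduct_le_of_fromBlocks_posSemidef (h i) x
    _ ≤ μ * ub i ^ 2 * μ⁻¹ := by gcongr; exact hx
    _ = ub i ^ 2 := by field_simp

/-- ellipsoid inclusion from the LMI condition. -/
theorem stmt12 {n m : ℕ} (P : Matrix (Fin n) (Fin n) ℝ) (hPsym : P.IsSymm) (hP : P.PosDef)
    (G : Matrix (Fin m) (Fin n) ℝ) (ub : Fin m → ℝ) (hub : ∀ i, 0 < ub i)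
    (μ : ℝ) (hμ : 0 < μ)
    (h : ∀ i : Fin m,
      (Matrix.fromBlocks P (Matrix.of fun j (_ : Fin 1) => G i j)
        (Matrix.of fun (_ : Fin 1) j => G i j)
        (Matrix.of fun _ _ => μ * ub i ^ 2)).PosSemidef) :
    {x : Fin n → ℝ | x ⬝ᵥ (P *ᵥ x) ≤ μ⁻¹} ⊆ {x : Fin n → ℝ | ∀ i, |(G *ᵥ x) i| ≤ ub i} :=
  stmt12_general P G ub hub μ hμ h
end
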